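/- Let P = {P_i} be a complete family of orthogonal projectors and ρ a density matrix. If 0 < α₁ ≤ α₂ < 1, then Σ_i Tr[(P_i ρ^{α₁} P_i)^{1/α₁}] ≤ Σ_i Tr[(P_i ρ^{α₂} P_i)^{1/α₂}]; equivalently, with C_{α,1}(ρ,P) = 1 − Σ_i Tr[(P_i ρ^{α} P_i)^{1/α}], one has C_{α₁,1}(ρ,P) ≥ C_{α₂,1}(ρ,P). -/

import Mathlib

open Matrix
open scoped ComplexOrder Classical

namespace BlockCoherence

variable {n : Type*} [Fintype n] [DecidableEq n]

/-- Real part of the trace of a complex matrix. -/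
noncomputable def retr (A : Matrix n n ℂ) : ℝ := (Matrix.trace A).re

/-- A density matrix: positive semidefinite with trace 1. -/
def IsDensityMatrix (ρ : Matrix n n ℂ) : Prop := ρ.PosSemidef ∧ Matrix.trace ρ = 1

/-- A complete family of orthogonal projectors. -/
def IsProjFamily {K : Type*} [Fintype K] (P : K → Matrix n n ℂ) : Prop :=
  (∀ k, (P k).IsHermitian) ∧ (∀ k, P k * P k = P k) ∧
    (∀ j k, j ≠ k → P j * P k = 0) ∧ (∑ k, P k = 1)

/-- Block dephasing map Δ(ρ) = Σ_k P_k ρ P_k. -/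
noncomputable def deph {K : Type*} [Fintype K] (P : K → Matrix n n ℂ)
    (ρ : Matrix n n ℂ) : Matrix n n ℂ := ∑ k, P k * ρ * P k

/-- Block incoherent (free) states. -/
def IsBlockIncoherent {K : Type*} [Fintype K] (P : K → Matrix n n ℂ)
    (σ : Matrix n n ℂ) : Prop := IsDensityMatrix σ ∧ σ = deph P σ

/-- A block-incoherent operation presented by its Kraus operators. -/
def IsBIOp {K : Type*} [Fintype K] {N : Type*} [Fintype N]
    (P : K → Matrix n n ℂ) (Kr : N → Matrix n n ℂ) : Prop :=
  (∑ m, (Kr m)ᴴ * Kr m = 1) ∧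
    ∀ (m : N) (i j : K), i ≠ j → ∀ σ, IsBlockIncoherent P σ →
      P i * (Kr m * σ * (Kr m)ᴴ) * P j = 0

/-- The channel determined by Kraus operators. -/
noncomputable def krausApply {N : Type*} [Fintype N]
    (Kr : N → Matrix n n ℂ) (ρ : Matrix n n ℂ) : Matrix n n ℂ :=
  ∑ m, Kr m * ρ * (Kr m)ᴴ

/-- A block coherence measure: conditions (B1)-(B4). -/
structure IsBlockCoherenceMeasure {K : Type*} [Fintype K] (P : K → Matrix n n ℂ)
    (C : Matrix n n ℂ → ℝ) : Prop where
  nonneg : ∀ ρ, IsDensityMatrix ρ → 0 ≤ C ρ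
  eq_zero_iff : ∀ ρ, IsDensityMatrix ρ → (C ρ = 0 ↔ IsBlockIncoherent P ρ)
  monotone : ∀ ρ, IsDensityMatrix ρ → ∀ {N : Type} [Fintype N] (Kr : N → Matrix n n ℂ),
    IsBIOp P Kr → C (krausApply Kr ρ) ≤ C ρ
  strong_monotone : ∀ ρ, IsDensityMatrix ρ → ∀ {N : Type} [Fintype N] (Kr : N → Matrix n n ℂ),
    IsBIOp P Kr →
      ∑ m, (if retr (Kr m * ρ * (Kr m)ᴴ) = 0 then (0 : ℝ) else
        retr (Kr m * ρ * (Kr m)ᴴ) *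
          C ((retr (Kr m * ρ * (Kr m)ᴴ))⁻¹ • (Kr m * ρ * (Kr m)ᴴ))) ≤ C ρ
  convex : ∀ {N : Type} [Fintype N] (p : N → ℝ) (ρs : N → Matrix n n ℂ),
    (∀ m, 0 ≤ p m) → ∑ m, p m = 1 → (∀ m, IsDensityMatrix (ρs m)) →
      C (∑ m, p m • ρs m) ≤ ∑ m, p m * C (ρs m)

/-- Real power of a matrix via the spectral functional calculus (0 on non-Hermitian input). -/
noncomputable def mpow (A : Matrix n n ℂ) (t : ℝ) : Matrix n n ℂ :=
  if hA : A.IsHermitian then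
    (hA.eigenvectorUnitary : Matrix n n ℂ) *
      Matrix.diagonal (fun i => ((hA.eigenvalues i ^ t : ℝ) : ℂ)) *
      (star (hA.eigenvectorUnitary : Matrix n n ℂ))
  else 0

/-- Positive semidefinite square root (0 on non-PSD input). -/
noncomputable def msqrt (A : Matrix n n ℂ) : Matrix n n ℂ :=
  if hA : A.PosSemidef then
    (hA.1.eigenvectorUnitary : Matrix n n ℂ) *
      Matrix.diagonal ((↑) ∘ (fun x : ℝ => Real.sqrt x) ∘ hA.1.eigenvalues) *
      (star (hA.1.eigenvectorUnitary : Matrix n n ℂ))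
  else 0

/-- Base-2 matrix logarithm via spectral calculus, with the convention log 0 = 0. -/
noncomputable def mlog2 (A : Matrix n n ℂ) : Matrix n n ℂ :=
  if hA : A.IsHermitian then
    (hA.eigenvectorUnitary : Matrix n n ℂ) *
      Matrix.diagonal (fun i => ((Real.logb 2 (hA.eigenvalues i) : ℝ) : ℂ)) *
      (star (hA.eigenvectorUnitary : Matrix n n ℂ))
  else 0

/-- Trace norm ‖M‖_Tr = Tr √(MᴴM). -/
noncomputable def trNorm (M : Matrix n n ℂ) : ℝ :=
  retr (msqrt (Mᴴ * M))

/-- The α-z Rényi block coherence measure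
`C_{α,z}(ρ,P) = 1 - (max_{σ∈I_B} Tr[(σ^{(1-α)/(2z)} ρ^{α/z} σ^{(1-α)/(2z)})^z])^{1/α}`. -/
noncomputable def Caz {K : Type*} [Fintype K] (α z : ℝ) (P : K → Matrix n n ℂ)
    (ρ : Matrix n n ℂ) : ℝ :=
  1 - (sSup {x : ℝ | ∃ σ, IsBlockIncoherent P σ ∧
    x = retr (mpow (mpow σ ((1 - α) / (2 * z)) * mpow ρ (α / z) *
      mpow σ ((1 - α) / (2 * z))) z)}) ^ (1 / α)

end BlockCoherence

/-!
Fix a block `P` and put `X = P ρ^α₁ P`, `Y = P ρ^α₂ P`, `r = α₁ / α₂ ≤ 1`. In an orthonormal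
eigenbasis `(u_i)` of `X`, with `ρ = Σ_k λ_k v_k v_kᴴ`,
`⟨u_i, X u_i⟩ = Σ_k |⟨v_k, P u_i⟩|² (λ_k^α₂)^r ≤ ⟨u_i, Y u_i⟩^r`
by Jensen's inequality for the concave `t ↦ t^r`, the weights summing to `‖P u_i‖² ≤ 1`.
Hence `Tr X^(1/α₁) ≤ Σ_i ⟨u_i, Y u_i⟩^(1/α₂) ≤ Tr Y^(1/α₂)`, the last step being Peierls'
inequality for the convex `t ↦ t^(1/α₂)`. Summing over the blocks gives the theorem.
-/

namespace Matrix

variable {𝕜 : Type*} [RCLike 𝕜] {m n : Type*}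

lemma conjTranspose_mul_diagonal_mul_apply_self [Fintype m] [DecidableEq m] (B : Matrix m n 𝕜)
    (d : m → ℝ) (i : n) :
    (Bᴴ * diagonal (fun k => (d k : 𝕜)) * B) i i = ((∑ k, d k * ‖B k i‖ ^ 2 : ℝ) : 𝕜) := by
  simp only [mul_apply, diagonal_apply, conjTranspose_apply, mul_ite, mul_zero,
    Finset.sum_ite_eq', Finset.mem_univ, if_true]
  push_cast
  refine Finset.sum_congr rfl fun k _ => ?_
  rw [← RCLike.conj_mul]
  simp only [RCLike.star_def]
  ring

lemma conjTranspose_mul_self_apply_self [Fintype m] (B : Matrix m n 𝕜) (i : n) :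
    (Bᴴ * B) i i = ((∑ k, ‖B k i‖ ^ 2 : ℝ) : 𝕜) := by
  classical
  simpa using conjTranspose_mul_diagonal_mul_apply_self B 1 i

lemma sum_norm_sq_mul_apply_le_of_isHermitian_of_idempotent [Fintype m] [DecidableEq m]
    {P : Matrix m m 𝕜} (hP : P.IsHermitian) (hPP : P * P = P) (B : Matrix m n 𝕜) (i : n) :
    ∑ k, ‖(P * B) k i‖ ^ 2 ≤ ∑ k, ‖B k i‖ ^ 2 := by
  have hQ : (1 - P)ᴴ * (1 - P) = 1 - P := by
    rw [conjTranspose_sub, conjTranspose_one, hP.eq, Matrix.sub_mul, Matrix.mul_sub,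
      Matrix.mul_sub, hPP]
    simp
  have hconj : ∀ Q : Matrix m m 𝕜, (Q * B)ᴴ * (Q * B) = Bᴴ * (Qᴴ * Q) * B := fun Q => by
    simp only [conjTranspose_mul, Matrix.mul_assoc]
  have hsplit : (P * B)ᴴ * (P * B) + ((1 - P) * B)ᴴ * ((1 - P) * B) = Bᴴ * B := by
    rw [hconj, hconj, hQ, hP.eq, hPP, ← Matrix.add_mul, ← Matrix.mul_add, add_sub_cancel,
      Matrix.mul_one]
  have hentry := congrFun (congrFun hsplit i) i
  simp only [add_apply, conjTranspose_mul_self_apply_self] at hentry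
  have hsum : ∑ k, ‖(P * B) k i‖ ^ 2 + ∑ k, ‖((1 - P : Matrix m m 𝕜) * B) k i‖ ^ 2 =
      ∑ k, ‖B k i‖ ^ 2 := by
    exact_mod_cast hentry
  linarith [Finset.sum_nonneg fun k (_ : k ∈ Finset.univ) =>
    sq_nonneg ‖((1 - P : Matrix m m 𝕜) * B) k i‖]

variable [Fintype n] [DecidableEq n]

lemma sum_norm_sq_apply_of_mem_unitaryGroup_left {U : Matrix n n 𝕜} (hU : U ∈ unitaryGroup n 𝕜)
    (i : n) : ∑ k, ‖U k i‖ ^ 2 = 1 := by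
  have hentry := conjTranspose_mul_self_apply_self U i
  rw [← star_eq_conjTranspose, mem_unitaryGroup_iff'.mp hU, one_apply_eq] at hentry
  exact_mod_cast hentry.symm

lemma sum_norm_sq_apply_of_mem_unitaryGroup_right {U : Matrix n n 𝕜} (hU : U ∈ unitaryGroup n 𝕜)
    (k : n) : ∑ i, ‖U k i‖ ^ 2 = 1 := by
  simpa using sum_norm_sq_apply_of_mem_unitaryGroup_left (Unitary.star_mem hU) k

lemma sum_norm_sq_unitary_mul_apply {U : Matrix n n 𝕜} (hU : U ∈ unitaryGroup n 𝕜)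
    (C : Matrix n m 𝕜) (i : m) : ∑ k, ‖(U * C) k i‖ ^ 2 = ∑ k, ‖C k i‖ ^ 2 := by
  have h : (U * C)ᴴ * (U * C) = Cᴴ * C := by
    rw [conjTranspose_mul, Matrix.mul_assoc, ← Matrix.mul_assoc Uᴴ, ← star_eq_conjTranspose U,
      mem_unitaryGroup_iff'.mp hU, Matrix.one_mul]
  have hentry := congrFun (congrFun h i) i
  rw [conjTranspose_mul_self_apply_self, conjTranspose_mul_self_apply_self] at hentry
  exact_mod_cast hentry

namespace IsHermitian

variable {A : Matrix n n 𝕜}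

lemma eq_eigenvectorUnitary_mul_diagonal_mul_star (hA : A.IsHermitian) :
    A = hA.eigenvectorUnitary * diagonal (fun j => (hA.eigenvalues j : 𝕜)) *
      star (hA.eigenvectorUnitary : Matrix n n 𝕜) :=
  hA.spectral_theorem

lemma eigenvalues_eq_re_conj_apply_self (hA : A.IsHermitian) (i : n) :
    hA.eigenvalues i =
      RCLike.re
        ((star (hA.eigenvectorUnitary : Matrix n n 𝕜) * A * hA.eigenvectorUnitary) i i) := by
  have h := hA.conjStarAlgAut_star_eigenvectorUnitary
  rw [Unitary.conjStarAlgAut_apply, Unitary.coe_star, star_star] at h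
  simp [h]

/-- Peierls' inequality. -/
theorem sum_convexOn_re_conj_apply_self_le (hA : A.IsHermitian) {U : Matrix n n 𝕜}
    (hU : U ∈ unitaryGroup n 𝕜) {s : Set ℝ} {f : ℝ → ℝ} (hf : ConvexOn ℝ s f)
    (hs : ∀ j, hA.eigenvalues j ∈ s) :
    ∑ i, f (RCLike.re ((star U * A * U) i i)) ≤ ∑ j, f (hA.eigenvalues j) := by
  set W : Matrix n n 𝕜 := (hA.eigenvectorUnitary : Matrix n n 𝕜)
  set M := star W * U
  have hM : M ∈ unitaryGroup n 𝕜 := mul_mem (Unitary.star_mem hA.eigenvectorUnitary.2) hU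
  have hdiag : ∀ i, RCLike.re ((star U * A * U) i i) = ∑ j, ‖M j i‖ ^ 2 • hA.eigenvalues j := by
    intro i
    have : star U * A * U = Mᴴ * diagonal (fun j => (hA.eigenvalues j : 𝕜)) * M := by
      conv_lhs => rw [hA.eq_eigenvectorUnitary_mul_diagonal_mul_star]
      simp only [M, W, ← star_eq_conjTranspose, star_mul, star_star, Matrix.mul_assoc]
    rw [this, conjTranspose_mul_diagonal_mul_apply_self, RCLike.ofReal_re]
    simp only [smul_eq_mul, mul_comm]
  calc ∑ i, f (RCLike.re ((star U * A * U) i i))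
      ≤ ∑ i, ∑ j, ‖M j i‖ ^ 2 • f (hA.eigenvalues j) := by
        refine Finset.sum_le_sum fun i _ => hdiag i ▸ hf.map_sum_le (fun j _ => by positivity)
          (sum_norm_sq_apply_of_mem_unitaryGroup_left hM i) fun j _ => hs j
    _ = ∑ j, f (hA.eigenvalues j) := by
        rw [Finset.sum_comm]
        simp only [smul_eq_mul, ← Finset.sum_mul, sum_norm_sq_apply_of_mem_unitaryGroup_right hM,
          one_mul]

end IsHermitian

end Matrix

lemma ConcaveOn.sum_mul_le_map_sum_mul {ι : Type*} {t : Finset ι} {s : Set ℝ} {f : ℝ → ℝ}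
    (hf : ConcaveOn ℝ s f) (hs : (0 : ℝ) ∈ s) (hf0 : 0 ≤ f 0) {w p : ι → ℝ}
    (hw : ∀ i ∈ t, 0 ≤ w i) (hw1 : ∑ i ∈ t, w i ≤ 1) (hp : ∀ i ∈ t, p i ∈ s) :
    ∑ i ∈ t, w i * f (p i) ≤ f (∑ i ∈ t, w i * p i) := by
  have h := hf.map_add_sum_le hw (v := 1 - ∑ i ∈ t, w i) (by ring) hp (by linarith) hs
  simp only [smul_eq_mul, mul_zero, zero_add] at h
  nlinarith

namespace BlockCoherence

variable {n : Type*} [Fintype n] [DecidableEq n]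

lemma mpow_of_isHermitian {A : Matrix n n ℂ} (hA : A.IsHermitian) (t : ℝ) :
    mpow A t = hA.eigenvectorUnitary * diagonal (fun i => ((hA.eigenvalues i ^ t : ℝ) : ℂ)) *
      star (hA.eigenvectorUnitary : Matrix n n ℂ) :=
  dif_pos hA

lemma retr_mpow {A : Matrix n n ℂ} (hA : A.IsHermitian) (t : ℝ) :
    retr (mpow A t) = ∑ i, hA.eigenvalues i ^ t := by
  rw [retr, mpow_of_isHermitian hA, trace_mul_comm, ← Matrix.mul_assoc,
    Unitary.coe_star_mul_self, Matrix.one_mul, trace_diagonal, Complex.re_sum]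
  simp only [Complex.ofReal_re]

lemma posSemidef_mpow {A : Matrix n n ℂ} (hA : A.PosSemidef) (t : ℝ) : (mpow A t).PosSemidef := by
  rw [mpow_of_isHermitian hA.1, star_eq_conjTranspose]
  refine PosSemidef.mul_mul_conjTranspose_same (posSemidef_diagonal_iff.mpr fun i => ?_) _
  exact Complex.zero_le_real.mpr (Real.rpow_nonneg (hA.eigenvalues_nonneg i) t)

lemma star_mul_mul_mpow_mul_mul_eq {A : Matrix n n ℂ} (hA : A.IsHermitian) {P : Matrix n n ℂ}
    (hP : P.IsHermitian) (U : Matrix n n ℂ) (t : ℝ) :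
    star U * (P * mpow A t * P) * U =
      (star (hA.eigenvectorUnitary : Matrix n n ℂ) * P * U)ᴴ *
        diagonal (fun i => ((hA.eigenvalues i ^ t : ℝ) : ℂ)) *
          (star (hA.eigenvectorUnitary : Matrix n n ℂ) * P * U) := by
  rw [mpow_of_isHermitian hA]
  simp only [star_eq_conjTranspose, conjTranspose_mul, conjTranspose_conjTranspose, hP.eq,
    Matrix.mul_assoc]

lemma posSemidef_mul_mpow_mul {A : Matrix n n ℂ} (hA : A.PosSemidef) {P : Matrix n n ℂ}
    (hP : P.IsHermitian) (t : ℝ) : (P * mpow A t * P).PosSemidef := by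
  simpa only [hP.eq] using (posSemidef_mpow hA t).conjTranspose_mul_mul_same P

lemma re_conj_mul_mpow_mul_apply_self_le {ρ : Matrix n n ℂ} (hρ : ρ.PosSemidef)
    {P : Matrix n n ℂ} (hP : P.IsHermitian) (hPP : P * P = P) {U : Matrix n n ℂ}
    (hU : U ∈ unitaryGroup n ℂ) {α₁ α₂ : ℝ} (h1 : 0 < α₁) (h12 : α₁ ≤ α₂) (i : n) :
    RCLike.re ((star U * (P * mpow ρ α₁ * P) * U) i i) ≤
      RCLike.re ((star U * (P * mpow ρ α₂ * P) * U) i i) ^ (α₁ / α₂) := by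
  have hα₂ : 0 < α₂ := h1.trans_le h12
  have hweights :
      ∑ k, ‖(star (hρ.1.eigenvectorUnitary : Matrix n n ℂ) * P * U) k i‖ ^ 2 ≤ 1 := by
    calc _ = ∑ k, ‖(P * U) k i‖ ^ 2 := by
          rw [Matrix.mul_assoc]
          exact sum_norm_sq_unitary_mul_apply (Unitary.star_mem hρ.1.eigenvectorUnitary.2) _ i
      _ ≤ ∑ k, ‖U k i‖ ^ 2 := sum_norm_sq_mul_apply_le_of_isHermitian_of_idempotent hP hPP U i
      _ = 1 := sum_norm_sq_apply_of_mem_unitaryGroup_left hU i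
  have hpow : ∀ k, hρ.1.eigenvalues k ^ α₁ = (hρ.1.eigenvalues k ^ α₂) ^ (α₁ / α₂) := fun k => by
    rw [← Real.rpow_mul (hρ.eigenvalues_nonneg k), mul_div_cancel₀ _ hα₂.ne']
  rw [star_mul_mul_mpow_mul_mul_eq hρ.1 hP, star_mul_mul_mpow_mul_mul_eq hρ.1 hP,
    ← RCLike.ofReal_eq_complex_ofReal, conjTranspose_mul_diagonal_mul_apply_self,
    conjTranspose_mul_diagonal_mul_apply_self, RCLike.ofReal_re, RCLike.ofReal_re]
  simp only [hpow, mul_comm _ (‖_‖ ^ 2)]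
  have hconcave := Real.concaveOn_rpow (div_pos h1 hα₂).le ((div_le_one hα₂).mpr h12)
  exact hconcave.sum_mul_le_map_sum_mul Set.self_mem_Ici (Real.rpow_nonneg le_rfl _)
    (fun k _ => sq_nonneg _) hweights fun k _ => Real.rpow_nonneg (hρ.eigenvalues_nonneg k) α₂

theorem retr_mpow_mul_mpow_mul_le {ρ : Matrix n n ℂ} (hρ : ρ.PosSemidef) {P : Matrix n n ℂ}
    (hP : P.IsHermitian) (hPP : P * P = P) {α₁ α₂ : ℝ} (h1 : 0 < α₁) (h12 : α₁ ≤ α₂)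
    (h2 : α₂ ≤ 1) :
    retr (mpow (P * mpow ρ α₁ * P) (1 / α₁)) ≤ retr (mpow (P * mpow ρ α₂ * P) (1 / α₂)) := by
  have hα₂ : 0 < α₂ := h1.trans_le h12
  have hX := posSemidef_mul_mpow_mul hρ hP α₁
  have hY := posSemidef_mul_mpow_mul hρ hP α₂
  set U : Matrix n n ℂ := (hX.1.eigenvectorUnitary : Matrix n n ℂ)
  have hU : U ∈ unitaryGroup n ℂ := hX.1.eigenvectorUnitary.2
  set d : n → ℝ := fun i => RCLike.re ((star U * (P * mpow ρ α₂ * P) * U) i i)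
  have hd : ∀ i, 0 ≤ d i := fun i =>
    (RCLike.nonneg_iff.mp (hY.conjTranspose_mul_mul_same U).diag_nonneg).1
  calc retr (mpow (P * mpow ρ α₁ * P) (1 / α₁))
      = ∑ i, hX.1.eigenvalues i ^ (1 / α₁) := retr_mpow hX.1 _
    _ ≤ ∑ i, (d i ^ (α₁ / α₂)) ^ (1 / α₁) := by
        refine Finset.sum_le_sum fun i _ =>
          Real.rpow_le_rpow (hX.eigenvalues_nonneg i) ?_ (by positivity)
        rw [hX.1.eigenvalues_eq_re_conj_apply_self]
        exact re_conj_mul_mpow_mul_apply_self_le hρ hP hPP hU h1 h12 i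
    _ = ∑ i, d i ^ (1 / α₂) := by
        refine Finset.sum_congr rfl fun i _ => ?_
        rw [← Real.rpow_mul (hd i)]
        field_simp
    _ ≤ ∑ j, hY.1.eigenvalues j ^ (1 / α₂) :=
        hY.1.sum_convexOn_re_conj_apply_self_le hU (convexOn_rpow ((one_le_div hα₂).mpr h2))
          fun j => hY.eigenvalues_nonneg j
    _ = retr (mpow (P * mpow ρ α₂ * P) (1 / α₂)) := (retr_mpow hY.1 _).symm

/-- for `0 < α₁ ≤ α₂ < 1`,
`Σ_i Tr[(P_i ρ^{α₁} P_i)^{1/α₁}] ≤ Σ_i Tr[(P_i ρ^{α₂} P_i)^{1/α₂}]`;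
equivalently `C_{α₁,1}(ρ,P) ≥ C_{α₂,1}(ρ,P)`
where `C_{α,1}(ρ,P) = 1 - Σ_i Tr[(P_i ρ^{α} P_i)^{1/α}]`. -/
theorem Caz_one_antitone_in_alpha
    {K : Type*} [Fintype K]
    (P : K → Matrix n n ℂ) (hP : IsProjFamily P)
    (ρ : Matrix n n ℂ) (hρ : IsDensityMatrix ρ)
    (α₁ α₂ : ℝ) (h1 : 0 < α₁) (h12 : α₁ ≤ α₂) (h2 : α₂ < 1) :
    (∑ i, retr (mpow (P i * mpow ρ α₁ * P i) (1 / α₁)) ≤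
      ∑ i, retr (mpow (P i * mpow ρ α₂ * P i) (1 / α₂))) ∧
    (1 - ∑ i, retr (mpow (P i * mpow ρ α₂ * P i) (1 / α₂)) ≤
      1 - ∑ i, retr (mpow (P i * mpow ρ α₁ * P i) (1 / α₁))) := by
  obtain ⟨hHerm, hIdem, -, -⟩ := hP
  have hblocks : ∑ i, retr (mpow (P i * mpow ρ α₁ * P i) (1 / α₁)) ≤
      ∑ i, retr (mpow (P i * mpow ρ α₂ * P i) (1 / α₂)) :=
    Finset.sum_le_sum fun i _ => retr_mpow_mul_mpow_mul_le hρ.1 (hHerm i) (hIdem i) h1 h12 h2.le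
  exact ⟨hblocks, sub_le_sub_left hblocks 1⟩

end BlockCoherence
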